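/- arXiv:0901.0661 — 2 statements merged into one kernel-verified Lean document; each statement's English description precedes it below -/
import Mathlib

section
/- Consider long-range percolation on ℤ^d with connection function λ satisfying λ(r) < α r^{−β''} for all r ≥ 1, for some constants α > 0 and β'' > 0. Then for every k ∈ ℕ_+ and every x ∈ ℤ^d with x ≠ 0, P(D(0,x) ≤ k) ≤ Σ_{i=1}^{k} E(|B_{i−1}|) · E(|B_{k−i}|) · α (‖x‖/k)^{−β''}. -/
open MeasureTheory ProbabilityTheory Filter Set
open scoped ENNReal NNReal

noncomputable section

namespace LongRangePercolation

/-- Vertices of the lattice `ℤ^d`. -/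
abbrev Vtx (d : ℕ) := Fin d → ℤ

variable {d : ℕ} {Ω : Type*}

/-- The random graph determined by an edge configuration `ω`:
`x` and `y` are adjacent iff they are distinct and the edge `{x, y}` is open in `ω`. -/
def percGraph (edge : Sym2 (Vtx d) → Ω → Bool) (ω : Ω) : SimpleGraph (Vtx d) where
  Adj x y := x ≠ y ∧ edge s(x, y) ω = true
  symm := by
    constructor
    intro x y h
    refine ⟨h.1.symm, ?_⟩
    rw [Sym2.eq_swap]
    exact h.2
  loopless := by constructor; intro x h; exact h.1 rfl

/-- The event that the origin belongs to an infinite cluster. -/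
def percEvent (edge : Sym2 (Vtx d) → Ω → Bool) : Set Ω :=
  {ω | {y : Vtx d | (percGraph edge ω).Reachable 0 y}.Infinite}

/-- The `k`-ball around the origin in the graph metric. -/
def ball (edge : Sym2 (Vtx d) → Ω → Bool) (ω : Ω) (k : ℕ) : Set (Vtx d) :=
  {y | (percGraph edge ω).edist 0 y ≤ (k : ℕ∞)}

/-- Expected size of the `k`-ball, `E|B_k|`, as an extended nonnegative real. -/
def EB [MeasurableSpace Ω] (μ : Measure Ω) (edge : Sym2 (Vtx d) → Ω → Bool) (k : ℕ) : ℝ≥0∞ :=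
  ∫⁻ ω, ((ball edge ω k).encard : ℝ≥0∞) ∂μ

/-- `|B_k|^{1/k}` as an extended nonnegative real. -/
def growth (edge : Sym2 (Vtx d) → Ω → Bool) (ω : Ω) (k : ℕ) : ℝ≥0∞ :=
  ((ball edge ω k).encard : ℝ≥0∞) ^ (1 / (k : ℝ))

/-- A function `L : (0,∞) → (0,∞)` is slowly varying if `L(cr)/L(r) → 1` as `r → ∞`
for every `c > 0`. -/
def SlowlyVarying (L : ℝ → ℝ) : Prop :=
  ∀ c : ℝ, 0 < c → Tendsto (fun r => L (c * r) / L r) atTop (nhds 1)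

/-- Bundled hypotheses asserting that `(μ, edge)` is a homogeneous long-range percolation
model on `ℤ^d` with connection function `lam`: the edge indicators are independent, and an
edge between distinct `x` and `y` is present with probability `1 - exp(-λ(‖x - y‖))`,
where `‖·‖` is the `L^∞` norm. -/
structure IsLRPModel (d : ℕ) {Ω : Type*} [MeasurableSpace Ω] (μ : Measure Ω)
    (edge : Sym2 (Vtx d) → Ω → Bool) (lam : ℝ → ℝ) : Prop where
  d_pos : 0 < d
  prob : IsProbabilityMeasure μ
  meas : ∀ e, Measurable (edge e)
  indep : iIndepFun edge μ
  lam_pos : ∀ r : ℝ, 0 < r → 0 < lam r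
  edge_prob : ∀ x y : Vtx d, x ≠ y →
    μ {ω | edge s(x, y) ω = true} = ENNReal.ofReal (1 - Real.exp (-(lam ‖x - y‖)))

/-- The percolation graph restricted to a vertex set `V` (only edges inside `V`). -/
def restGraph (edge : Sym2 (Vtx d) → Ω → Bool) (ω : Ω) (V : Set (Vtx d)) :
    SimpleGraph (Vtx d) where
  Adj x y := x ∈ V ∧ y ∈ V ∧ (percGraph edge ω).Adj x y
  symm := by
    constructor
    intro x y h
    exact ⟨h.2.1, h.1, h.2.2.symm⟩
  loopless := by
    constructor
    intro x h
    exact h.2.2.ne rfl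

/-- The cluster (connected component, as a vertex set) of `x` in a graph `G`. -/
def cluster (G : SimpleGraph (Vtx d)) (x : Vtx d) : Set (Vtx d) :=
  {y | G.Reachable x y}

/-- The box `V_K = ℤ^d ∩ [⌈-K/2⌉, ⌈K/2⌉)^d`. -/
def VK (d : ℕ) (r : ℕ) : Set (Vtx d) :=
  {x | ∀ i, ⌈-(r : ℝ) / 2⌉ ≤ x i ∧ x i < ⌈(r : ℝ) / 2⌉}

/-- The size of the largest cluster of the percolation graph restricted to `V_r`. -/
def maxClSize (edge : Sym2 (Vtx d) → Ω → Bool) (ω : Ω) (r : ℕ) : ℕ∞ :=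
  ⨆ x ∈ VK d r, (cluster (restGraph edge ω (VK d r)) x).encard

/-! ### The renormalisation construction -/

/-- `l_i = l_0^(2^i)`. -/
def lseq (l0 i : ℕ) : ℕ := l0 ^ (2 ^ i)

/-- The level-`i` block with index `n`:
`Λ_i(n) = ℤ^d ∩ ([-(l_i - 1)/2, (l_i - 1)/2]^d + n l_i)` (for odd `l_0`). -/
def block (d l0 i : ℕ) (n : Vtx d) : Set (Vtx d) :=
  {x | ∀ j, |x j - n j * (lseq l0 i : ℤ)| ≤ ((lseq l0 i : ℤ) - 1) / 2}

/-- The index of the level-`i` block containing `x`. -/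
def blockIdx (d l0 i : ℕ) (x : Vtx d) : Vtx d :=
  fun j => Int.fdiv (x j + ((lseq l0 i : ℤ) - 1) / 2) (lseq l0 i : ℤ)

/-- `h_i = (l_0^d + 1) 2^i - 1`. -/
def hseq (d l0 i : ℕ) : ℕ := (l0 ^ d + 1) * 2 ^ i - 1

/-- `D_i(x)`: the set of vertices of the level-`i` block of `x` within graph distance `h_i`
of `x` in the graph restricted to that block. -/
def Dset (edge : Sym2 (Vtx d) → Ω → Bool) (l0 : ℕ) (ω : Ω) (i : ℕ) (x : Vtx d) :
    Set (Vtx d) :=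
  {y | y ∈ block d l0 i (blockIdx d l0 i x) ∧
    (restGraph edge ω (block d l0 i (blockIdx d l0 i x))).edist x y ≤ (hseq d l0 i : ℕ∞)}

/-- `M_i = Π_{j=0}^i m_j`, defined by `M_0 = ρ l_0^d`, `M_{i+1} = c_0 L(l_{i+1}) M_i^2`
with `c_0 = 2ρ/25`. -/
def Mseq (d l0 : ℕ) (L : ℝ → ℝ) (ρ : ℝ) : ℕ → ℝ
  | 0 => ρ * (l0 : ℝ) ^ d
  | i + 1 => (2 * ρ / 25) * L ((lseq l0 (i + 1) : ℕ) : ℝ) * (Mseq d l0 L ρ i) ^ 2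

/-- `m_0 = ρ l_0^d` and `m_{i+1} = c_0 L(l_{i+1}) M_i` with `c_0 = 2ρ/25`. -/
def mseq (d l0 : ℕ) (L : ℝ → ℝ) (ρ : ℝ) : ℕ → ℝ
  | 0 => ρ * (l0 : ℝ) ^ d
  | i + 1 => (2 * ρ / 25) * L ((lseq l0 (i + 1) : ℕ) : ℝ) * Mseq d l0 L ρ i

/-- `x` is good up to level `i` in configuration `ω`. -/
def good (edge : Sym2 (Vtx d) → Ω → Bool) (l0 : ℕ) (L : ℝ → ℝ) (ρ : ℝ) :
    ℕ → Vtx d → Ω → Prop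
  | 0, x, ω =>
      ENNReal.ofReal (mseq d l0 L ρ 0) ≤ ((Dset edge l0 ω 0 x).encard : ℝ≥0∞)
  | i + 1, x, ω =>
      good edge l0 L ρ i x ω ∧
      ENNReal.ofReal (mseq d l0 L ρ (i + 1)) ≤
        (({n : Vtx d |
            block d l0 i n ⊆ block d l0 (i + 1) (blockIdx d l0 (i + 1) x) ∧
            ∃ y ∈ block d l0 i n,
              y ∉ block d l0 i 0 ∪ block d l0 i (blockIdx d l0 i x) ∧
              good edge l0 L ρ i y ω ∧
              ∃ z ∈ Dset edge l0 ω i x, (percGraph edge ω).Adj y z}).encard : ℝ≥0∞)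

/-- A vertex is ultimately good if it is good up to every level. -/
def ultGood (edge : Sym2 (Vtx d) → Ω → Bool) (l0 : ℕ) (L : ℝ → ℝ) (ρ : ℝ)
    (x : Vtx d) (ω : Ω) : Prop :=
  ∀ i : ℕ, good edge l0 L ρ i x ω

end LongRangePercolation

open LongRangePercolation

/-!
If `D(0, x) ≤ k`, a geodesic `0 = v₀, …, v_m = x` with `m ≤ k` has a step of length at least
`‖x‖ / k`, since the steps add up to `x`. Say it is the step from `y = v_j` to `z = v_{j+1}`, and
let `S = {v | D(0, v) < j}` be the open `j`-ball. Then three things happen: the open `j`-ball is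
`S` and `D(0, y) ≤ j`, an event decided by the edges touching `S`; the edge `{y, z}`, which does
not touch `S`, is open; and the rest of the geodesic is a path from `z` to `x` of length at most
`k - 1 - j` using only edges outside `S ∪ {y}`. These events depend on disjoint sets of edges, so
their probabilities multiply. Summing over `(S, y)` gives at most `E|B_j|` (if `E|B_j| < ∞` the
ball is a.s. finite, so only finite `S` matter), the edge costs at most `α (‖x‖ / k)^(-β'')`, and
by translation invariance `∑_z P(D(z, x) ≤ k - 1 - j) = E|B_{k-1-j}|`.
-/

lemma exists_norm_sub_div_le_norm_sub_succ {E : Type*} [SeminormedAddCommGroup E]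
    (g : ℕ → E) {m : ℕ} (hm : 0 < m) :
    ∃ t < m, ‖g m - g 0‖ / m ≤ ‖g (t + 1) - g t‖ := by
  have hsum : ∑ _t ∈ Finset.range m, ‖g m - g 0‖ / m ≤
      ∑ t ∈ Finset.range m, ‖g (t + 1) - g t‖ := by
    rw [Finset.sum_const, Finset.card_range, nsmul_eq_mul, mul_div_cancel₀ _ (by positivity),
      ← Finset.sum_range_sub]
    exact norm_sum_le _ _
  simpa using Finset.exists_le_of_sum_le (Finset.nonempty_range_iff.2 hm.ne') hsum

namespace SimpleGraph

variable {V : Type*} {G H : SimpleGraph V} {a b : V}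

lemma edist_le_of_chain (g : ℕ → V) (s n : ℕ)
    (h : ∀ t, s ≤ t → t < s + n → G.Adj (g t) (g (t + 1))) :
    G.edist (g s) (g (s + n)) ≤ n := by
  induction n with
  | zero => simp
  | succ n ih =>
    calc G.edist (g s) (g (s + (n + 1)))
        ≤ G.edist (g s) (g (s + n)) + G.edist (g (s + n)) (g (s + n + 1)) :=
          G.edist_triangle
      _ ≤ n + 1 := add_le_add (ih fun t h₁ h₂ => h t h₁ (by omega))
          (edist_eq_one_iff_adj.2 (h _ (by omega) (by omega))).le
      _ = (n + 1 : ℕ) := by push_cast; rfl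

lemma edist_le_add_one_iff {n : ℕ} {v : V} :
    G.edist a v ≤ n + 1 ↔ G.edist a v ≤ n ∨ ∃ u, G.edist a u ≤ n ∧ G.Adj u v := by
  constructor
  · intro h
    obtain ⟨p, hp⟩ := exists_walk_of_edist_ne_top (ne_top_of_le_ne_top (by simp) h)
    have hlen : p.length ≤ n + 1 := by
      rw [← ENat.natCast_le_natCast, hp]; exact_mod_cast h
    rcases Nat.le_succ_iff.1 hlen with hle | heq
    · exact .inl (hp ▸ by exact_mod_cast hle)
    · refine .inr ⟨p.getVert n, ?_, ?_⟩
      · simpa [p.getVert_zero] using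
          edist_le_of_chain p.getVert 0 n fun t _ ht => p.adj_getVert_succ (by omega)
      · have hv : p.getVert (n + 1) = v := p.getVert_of_length_le heq.le
        have := p.adj_getVert_succ (i := n) (by omega)
        rwa [hv] at this
  · rintro (h | ⟨u, hu, hadj⟩)
    · exact h.trans le_self_add
    · exact G.edist_triangle.trans (add_le_add hu (edist_eq_one_iff_adj.2 hadj).le)

lemma exists_geodesic_chain {m : ℕ} (h : G.edist a b = m) :
    ∃ g : ℕ → V, g 0 = a ∧ g m = b ∧ (∀ t < m, G.Adj (g t) (g (t + 1))) ∧
      ∀ t ≤ m, G.edist a (g t) = t := by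
  obtain ⟨p, hp⟩ := exists_walk_of_edist_eq_coe h
  have hadj : ∀ t < m, G.Adj (p.getVert t) (p.getVert (t + 1)) :=
    fun t ht => p.adj_getVert_succ (hp ▸ ht)
  refine ⟨p.getVert, p.getVert_zero, hp ▸ p.getVert_length, hadj, fun t ht => ?_⟩
  have hle : G.edist a (p.getVert t) ≤ t := by
    simpa [p.getVert_zero] using
      edist_le_of_chain p.getVert 0 t fun s _ hs => hadj s (by omega)
  have hrest : G.edist (p.getVert t) b ≤ (m - t : ℕ) := by
    simpa [Nat.add_sub_cancel' ht, hp ▸ p.getVert_length] using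
      edist_le_of_chain p.getVert t (m - t) fun s _ hs => hadj s (by omega)
  obtain ⟨e, he⟩ : ∃ e : ℕ, G.edist a (p.getVert t) = e :=
    ENat.ne_top_iff_exists.1 (ne_top_of_le_ne_top (by simp) hle) |>.imp fun _ h => h.symm
  have htri : (m : ℕ∞) ≤ e + (m - t : ℕ) :=
    h ▸ he ▸ G.edist_triangle.trans (add_le_add le_rfl hrest)
  rw [he] at hle ⊢
  norm_cast at hle htri ⊢
  omega

lemma edist_le_iff_of_le_of_adj (hHG : H ≤ G) {n : ℕ}
    (h : ∀ u ∈ H.ball a n, ∀ v, G.Adj u v → H.Adj u v) (v : V) :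
    G.edist a v ≤ n ↔ H.edist a v ≤ n := by
  induction n generalizing v with
  | zero => simp
  | succ n ih =>
    have ih' := ih (fun u hu => h u (ball_mono (by simp) hu))
    push_cast
    simp only [edist_le_add_one_iff, ih']
    refine or_congr_right ⟨fun ⟨u, hu, hadj⟩ => ⟨u, hu, h u ?_ v hadj⟩,
      fun ⟨u, hu, hadj⟩ => ⟨u, hu, hHG hadj⟩⟩
    rw [mem_ball, edist_comm]
    exact hu.trans_lt (by exact_mod_cast n.lt_succ_self)

lemma ball_eq_of_le_of_adj (hHG : H ≤ G) {n : ℕ}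
    (h : ∀ u ∈ H.ball a n, ∀ v, G.Adj u v → H.Adj u v) : G.ball a n = H.ball a n := by
  cases n with
  | zero => simp
  | succ n =>
    ext v
    have := edist_le_iff_of_le_of_adj (n := n) hHG
      (fun u hu => h u (ball_mono (by simp) hu)) v
    simpa [edist_comm, ENat.lt_add_one_iff] using this

lemma exists_long_step [SeminormedAddCommGroup V] {k : ℕ} (h : G.edist a b ≤ k) (hab : a ≠ b) :
    ∃ j < k, ∃ y z, G.edist a y = j ∧ G.edist a z = j + 1 ∧ G.Adj y z ∧
      ‖b - a‖ / k ≤ ‖z - y‖ ∧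
      ∀ H : SimpleGraph V, (∀ u v, (j : ℕ∞) < G.edist a u → (j : ℕ∞) < G.edist a v →
        G.Adj u v → H.Adj u v) → H.edist z b ≤ (k - 1 - j : ℕ) := by
  obtain ⟨m, hm⟩ := ENat.ne_top_iff_exists.1 (ne_top_of_le_ne_top (by simp) h)
  have hmk : m ≤ k := by exact_mod_cast hm ▸ h
  have hm0 : 0 < m := by
    rw [Nat.pos_iff_ne_zero]; rintro rfl; exact hab (edist_eq_zero_iff.1 hm.symm)
  obtain ⟨g, hg0, hgm, hadj, hdist⟩ := exists_geodesic_chain hm.symm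
  obtain ⟨j, hj, hlong⟩ := exists_norm_sub_div_le_norm_sub_succ g hm0
  refine ⟨j, by omega, g j, g (j + 1), hdist j (by omega), by exact_mod_cast hdist (j + 1) hj,
    hadj j hj, ?_, fun H hH => ?_⟩
  · rw [hg0, hgm] at hlong
    exact (div_le_div_of_nonneg_left (norm_nonneg _) (by exact_mod_cast hm0)
      (by exact_mod_cast hmk)).trans hlong
  · have hfar : ∀ t, j < t → t ≤ m → (j : ℕ∞) < G.edist a (g t) := fun t h₁ h₂ => by
      rw [hdist t h₂]; exact_mod_cast h₁
    have := edist_le_of_chain (G := H) g (j + 1) (m - (j + 1)) fun t h₁ h₂ =>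
      hH _ _ (hfar t (by omega) (by omega)) (hfar (t + 1) (by omega) (by omega))
        (hadj t (by omega))
    rw [Nat.add_sub_cancel' hj, hgm] at this
    exact this.trans (by exact_mod_cast (by omega : m - (j + 1) ≤ k - 1 - j))

lemma edist_map_le {W : Type*} {G' : SimpleGraph W} (f : G →g G') (a b : V) :
    G'.edist (f a) (f b) ≤ G.edist a b := by
  by_cases h : G.edist a b = ⊤
  · simp [h]
  · obtain ⟨p, hp⟩ := exists_walk_of_edist_ne_top h
    exact (edist_le (p.map f)).trans (by rw [Walk.length_map, hp])

lemma Iso.edist_eq {W : Type*} {G' : SimpleGraph W} (φ : G ≃g G') (a b : V) :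
    G'.edist (φ a) (φ b) = G.edist a b :=
  (edist_map_le φ.toHom a b).antisymm <| by
    simpa using edist_map_le φ.symm.toHom (φ a) (φ b)

section Measurable

variable {Ω : Type*} {mΩ : MeasurableSpace Ω} [Countable V] {G : Ω → SimpleGraph V}

lemma measurableSet_edist_le (hG : ∀ u v, MeasurableSet {ω | (G ω).Adj u v}) (a : V) (n : ℕ)
    (v : V) : MeasurableSet {ω | (G ω).edist a v ≤ n} := by
  induction n generalizing v with
  | zero => simp
  | succ n ih =>
    have : {ω | (G ω).edist a v ≤ (n + 1 : ℕ)} =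
        {ω | (G ω).edist a v ≤ n} ∪ ⋃ u, {ω | (G ω).edist a u ≤ n} ∩ {ω | (G ω).Adj u v} := by
      ext ω; push_cast; simp [edist_le_add_one_iff]
    rw [this]
    exact (ih v).union (.iUnion fun u => (ih u).inter (hG u v))

lemma measurableSet_mem_ball (hG : ∀ u v, MeasurableSet {ω | (G ω).Adj u v}) (a : V) (n : ℕ)
    (v : V) : MeasurableSet {ω | v ∈ (G ω).ball a n} := by
  cases n with
  | zero => simp
  | succ n =>
    simpa [edist_comm, ENat.lt_add_one_iff] using measurableSet_edist_le hG a n v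

lemma measurableSet_ball_eq (hG : ∀ u v, MeasurableSet {ω | (G ω).Adj u v}) (a : V) (n : ℕ)
    (S : Set V) : MeasurableSet {ω | (G ω).ball a n = S} := by
  have : {ω | (G ω).ball a n = S} = ⋂ v, {ω | v ∈ (G ω).ball a n ↔ v ∈ S} := by
    ext ω; simp [Set.ext_iff]
  rw [this]
  refine .iInter fun v => ?_
  by_cases hv : v ∈ S
  · simpa [hv] using measurableSet_mem_ball hG a n v
  · convert (measurableSet_mem_ball hG a n v).compl using 1
    ext ω; simp [hv]

end Measurable

end SimpleGraph

lemma MeasureTheory.Measure.map_eq_map_of_measure_eq_true {Ω : Type*} [MeasurableSpace Ω]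
    {μ : Measure Ω} [IsProbabilityMeasure μ] {X Y : Ω → Bool} (hX : Measurable X)
    (hY : Measurable Y) (h : μ {ω | X ω = true} = μ {ω | Y ω = true}) :
    μ.map X = μ.map Y := by
  refine Measure.ext_of_singleton fun b => ?_
  rw [Measure.map_apply hX (measurableSet_singleton b),
    Measure.map_apply hY (measurableSet_singleton b)]
  cases b
  · have hc (Z : Ω → Bool) : Z ⁻¹' {false} = (Z ⁻¹' {true})ᶜ := by ext; simp
    rw [hc, hc, prob_compl_eq_one_sub (hX (measurableSet_singleton true)),
      prob_compl_eq_one_sub (hY (measurableSet_singleton true))]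
    exact congrArg (1 - ·) h
  · exact h

namespace LongRangePercolation

variable {d : ℕ} {Ω : Type*} {edge : Sym2 (Vtx d) → Ω → Bool}

lemma one_le_norm_of_ne_zero {v : Vtx d} (hv : v ≠ 0) : 1 ≤ ‖v‖ := by
  obtain ⟨i, hi⟩ := Function.ne_iff.1 hv
  calc (1 : ℝ) ≤ ‖v i‖ := by rw [Int.norm_eq_abs]; exact_mod_cast Int.one_le_abs hi
    _ ≤ ‖v‖ := norm_le_pi_norm v i

section EdgeSigma

variable (edge) in
abbrev edgeSigma (I : Set (Sym2 (Vtx d))) : MeasurableSpace Ω :=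
  ⨆ e ∈ I, MeasurableSpace.comap (edge e) inferInstance

lemma edgeSigma_mono {I J : Set (Sym2 (Vtx d))} (h : I ⊆ J) :
    edgeSigma edge I ≤ edgeSigma (Ω := Ω) edge J :=
  biSup_mono h

lemma measurableSet_edge_edgeSigma {I : Set (Sym2 (Vtx d))} {e : Sym2 (Vtx d)} (he : e ∈ I) :
    MeasurableSet[edgeSigma edge I] {ω | edge e ω = true} :=
  le_iSup₂ (f := fun e (_ : e ∈ I) => MeasurableSpace.comap (edge e) inferInstance) e he _
    ⟨{true}, trivial, by ext; simp⟩

lemma measurableSet_adj_edgeSigma {I : Set (Sym2 (Vtx d))} {G : Ω → SimpleGraph (Vtx d)}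
    (hG : ∀ ω u v, (G ω).Adj u v ↔ s(u, v) ∈ I ∧ (percGraph edge ω).Adj u v) (u v : Vtx d) :
    MeasurableSet[edgeSigma edge I] {ω | (G ω).Adj u v} := by
  by_cases huv : s(u, v) ∈ I ∧ u ≠ v
  · convert measurableSet_edge_edgeSigma (edge := edge) huv.1 using 1
    ext ω; simp [hG, percGraph, huv.1, huv.2]
  · convert @MeasurableSet.empty _ (edgeSigma edge I)
    ext ω; simp only [hG, percGraph, Set.mem_ofPred_eq, Set.mem_empty_iff_false, iff_false]
    tauto

variable (edge) in
def ballEvent (j : ℕ) (S : Set (Vtx d)) (y : Vtx d) : Set Ω :=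
  {ω | (percGraph edge ω).ball 0 j = S ∧ y ∈ ball edge ω j}

/-- Along a shortest path, every vertex before the last lies in the open ball, so the event only
sees the edges touching `S`. -/
lemma measurableSet_ballEvent (S : Set (Vtx d)) (j : ℕ) (y : Vtx d) :
    MeasurableSet[edgeSigma edge {e | ∃ u ∈ e, u ∈ S}] (ballEvent edge j S y) := by
  set I := {e : Sym2 (Vtx d) | ∃ u ∈ e, u ∈ S}
  set T := fun ω => percGraph edge ω ⊓ SimpleGraph.fromEdgeSet I
  have hT ω u v : (T ω).Adj u v ↔ s(u, v) ∈ I ∧ (percGraph edge ω).Adj u v := by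
    have := (percGraph edge ω).ne_of_adj (a := u) (b := v)
    simp only [T, SimpleGraph.inf_adj, SimpleGraph.fromEdgeSet_adj]
    tauto
  have hlocal ω (hS : (percGraph edge ω).ball 0 j = S ∨ (T ω).ball 0 j = S) :
      ∀ u ∈ (T ω).ball 0 j, ∀ v, (percGraph edge ω).Adj u v → (T ω).Adj u v := by
    intro u hu v huv
    have huS : u ∈ S := by
      rcases hS with hS | hS
      · exact hS ▸ (SimpleGraph.edist_anti inf_le_left).trans_lt hu
      · exact hS ▸ hu
    exact (hT ω u v).2 ⟨⟨u, Sym2.mem_mk_left u v, huS⟩, huv⟩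
  have : ballEvent edge j S y = {ω | (T ω).ball 0 j = S} ∩ {ω | (T ω).edist 0 y ≤ j} := by
    ext ω
    have hle : T ω ≤ percGraph edge ω := inf_le_left
    constructor
    · rintro ⟨hS, hy⟩
      have h := hlocal ω (.inl hS)
      exact ⟨(SimpleGraph.ball_eq_of_le_of_adj hle h).symm.trans hS,
        (SimpleGraph.edist_le_iff_of_le_of_adj hle h y).1 hy⟩
    · rintro ⟨hS, hy⟩
      have h := hlocal ω (.inr hS)
      exact ⟨(SimpleGraph.ball_eq_of_le_of_adj hle h).trans hS,
        (SimpleGraph.edist_le_iff_of_le_of_adj hle h y).2 hy⟩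
  rw [this]
  have hadj := measurableSet_adj_edgeSigma hT
  exact (SimpleGraph.measurableSet_ball_eq hadj 0 j S).inter
    (SimpleGraph.measurableSet_edist_le hadj 0 j y)

end EdgeSigma

section Translation

/-- Loops are invisible in `percGraph` and `IsLRPModel` says nothing about their law, so
translation invariance only holds for the edge process indexed by non-diagonal pairs. -/
abbrev PotentialEdge (d : ℕ) := {e : Sym2 (Vtx d) // ¬ e.IsDiag}

def PotentialEdge.translate (w : Vtx d) (e : PotentialEdge d) : PotentialEdge d :=
  ⟨e.1.map (· + w), by rw [Sym2.isDiag_map (add_left_injective w)]; exact e.2⟩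

lemma PotentialEdge.translate_injective (w : Vtx d) :
    Function.Injective fun e : PotentialEdge d => (e.translate w).1 :=
  fun _ _ h => Subtype.ext (Sym2.map.injective (add_left_injective w) h)

def configGraph (f : PotentialEdge d → Bool) : SimpleGraph (Vtx d) :=
  SimpleGraph.fromEdgeSet {e | ∃ h : ¬ e.IsDiag, f ⟨e, h⟩ = true}

lemma measurableSet_configGraph_adj (u v : Vtx d) :
    MeasurableSet {f : PotentialEdge d → Bool | (configGraph f).Adj u v} := by
  by_cases huv : u = v
  · simp [configGraph, huv]
  · have hd : ¬ s(u, v).IsDiag := by simpa using huv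
    have : Measurable fun f : PotentialEdge d → Bool => f ⟨s(u, v), hd⟩ := measurable_pi_apply _
    convert this (measurableSet_singleton true)
    ext f; simp [configGraph, huv, hd]

lemma percGraph_eq_configGraph (ω : Ω) :
    percGraph edge ω = configGraph fun e => edge e.1 ω := by
  ext u v
  simp only [percGraph, configGraph, SimpleGraph.fromEdgeSet_adj, Set.mem_ofPred_eq]
  exact ⟨fun ⟨h, he⟩ => ⟨⟨by simpa using h, he⟩, h⟩, fun ⟨⟨_, he⟩, h⟩ => ⟨h, he⟩⟩

def configGraphTranslateIso (f : PotentialEdge d → Bool) (w : Vtx d) :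
    configGraph (fun e => f (e.translate w)) ≃g configGraph f where
  toEquiv := Equiv.addRight w
  map_rel_iff' := by simp [configGraph, PotentialEdge.translate]

end Translation

variable (edge) in
def longStepEvent (x : Vtx d) (r : ℝ) (j n : ℕ) : Set Ω :=
  {ω | ∃ y z, r ≤ ‖y - z‖ ∧ y ∈ ball edge ω j ∧ y ∉ (percGraph edge ω).ball 0 j ∧
    z ∉ (percGraph edge ω).ball 0 j ∧ edge s(y, z) ω = true ∧
    (restGraph edge ω ((percGraph edge ω).ball 0 j ∪ {y})ᶜ).edist z x ≤ n}

lemma setOf_edist_le_subset_iUnion_longStepEvent {x : Vtx d} (hx : x ≠ 0) (k : ℕ) :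
    {ω | (percGraph edge ω).edist 0 x ≤ k} ⊆
      ⋃ j ∈ Finset.range k, longStepEvent edge x (‖x‖ / k) j (k - 1 - j) := by
  intro ω hω
  obtain ⟨j, hjk, y, z, hy, hz, hyz, hlong, hpath⟩ :=
    SimpleGraph.exists_long_step hω (Ne.symm hx)
  have hfar {u : Vtx d} (hu : (j : ℕ∞) ≤ (percGraph edge ω).edist 0 u) :
      u ∉ (percGraph edge ω).ball 0 j := by
    simpa [SimpleGraph.edist_comm] using hu
  have hout {u : Vtx d} (hu : (j : ℕ∞) < (percGraph edge ω).edist 0 u) :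
      u ∈ ((percGraph edge ω).ball 0 j ∪ {y})ᶜ := by
    rintro (hu' | rfl)
    · exact hfar hu.le hu'
    · exact hu.ne hy.symm
  refine Set.mem_biUnion (Finset.mem_range.2 hjk) ⟨y, z, ?_, hy.le, hfar hy.ge,
    hfar (by rw [hz]; exact le_self_add), hyz.2,
    hpath _ fun u v hu hv huv => ⟨hout hu, hout hv, huv⟩⟩
  simpa [norm_sub_rev] using hlong

variable (edge) in
def stepEvent (x : Vtx d) (r : ℝ) (j n : ℕ) (S : Finset (Vtx d)) (y z : Vtx d) : Set Ω :=
  if y ∉ S ∧ z ∉ S ∧ r ≤ ‖y - z‖ then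
    ballEvent edge j S y ∩ {ω | edge s(y, z) ω = true} ∩
      {ω | (restGraph edge ω (S ∪ {y})ᶜ).edist z x ≤ n}
  else ∅

lemma longStepEvent_subset (x : Vtx d) (r : ℝ) (j n : ℕ) :
    longStepEvent edge x r j n ⊆ {ω | (ball edge ω j).Infinite} ∪
      ⋃ p : (Finset (Vtx d) × Vtx d) × Vtx d, stepEvent edge x r j n p.1.1 p.1.2 p.2 := by
  rintro ω ⟨y, z, hyz, hy, hyS, hzS, he, hpath⟩
  by_cases hfin : (ball edge ω j).Finite
  · have hsub : (percGraph edge ω).ball 0 j ⊆ ball edge ω j := fun v hv => by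
      simpa [ball, SimpleGraph.edist_comm] using hv.le
    set S := (hfin.subset hsub).toFinset
    have hS : (S : Set (Vtx d)) = (percGraph edge ω).ball 0 j := Set.Finite.coe_toFinset _
    have hguard : y ∉ S ∧ z ∉ S ∧ r ≤ ‖y - z‖ := by
      simp only [← Finset.mem_coe, hS]; exact ⟨hyS, hzS, hyz⟩
    refine Or.inr (Set.mem_iUnion.2 ⟨((S, y), z), ?_⟩)
    simp only [stepEvent, ballEvent, if_pos hguard, hS]
    exact ⟨⟨⟨rfl, hy⟩, he⟩, hpath⟩
  · exact Or.inl hfin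

lemma encard_ball_eq_tsum (ω : Ω) (n : ℕ) :
    ((ball edge ω n).encard : ℝ≥0∞) = ∑' y, {ω | y ∈ ball edge ω n}.indicator 1 ω := by
  rw [← ENNReal.tsum_set_one]
  exact tsum_subtype (ball edge ω n) 1

variable [MeasurableSpace Ω] {μ : Measure Ω} {lam : ℝ → ℝ}

lemma edgeSigma_le (hmeas : ∀ e, Measurable (edge e)) (I : Set (Sym2 (Vtx d))) :
    edgeSigma edge I ≤ ‹MeasurableSpace Ω› :=
  iSup₂_le fun e _ => (hmeas e).comap_le

lemma measurableSet_percGraph_adj (hmeas : ∀ e, Measurable (edge e)) (u v : Vtx d) :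
    MeasurableSet {ω | (percGraph edge ω).Adj u v} :=
  edgeSigma_le hmeas univ _ (measurableSet_adj_edgeSigma (by simp) u v)

lemma measure_inter_inter_eq_mul (hmeas : ∀ e, Measurable (edge e)) (hindep : iIndepFun edge μ)
    {I₁ I₂ I₃ : Set (Sym2 (Vtx d))} (h₁₂ : Disjoint I₁ I₂) (h₁₃ : Disjoint I₁ I₃)
    (h₂₃ : Disjoint I₂ I₃) {A B C : Set Ω} (hA : MeasurableSet[edgeSigma edge I₁] A)
    (hB : MeasurableSet[edgeSigma edge I₂] B) (hC : MeasurableSet[edgeSigma edge I₃] C) :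
    μ (A ∩ B ∩ C) = μ A * μ B * μ C := by
  have hle e : MeasurableSpace.comap (edge e) inferInstance ≤ ‹MeasurableSpace Ω› :=
    (hmeas e).comap_le
  have hBC : MeasurableSet[edgeSigma edge (I₂ ∪ I₃)] (B ∩ C) :=
    (edgeSigma_mono subset_union_left _ hB).inter (edgeSigma_mono subset_union_right _ hC)
  rw [inter_assoc, (Indep_iff _ _ _).1 (indep_iSup_of_disjoint hle hindep.iIndep
      (disjoint_union_right.2 ⟨h₁₂, h₁₃⟩)) A _ hA hBC,
    (Indep_iff _ _ _).1 (indep_iSup_of_disjoint hle hindep.iIndep h₂₃) B C hB hC, mul_assoc]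

section ExpectedBallSize

lemma measurableSet_mem_ball (hmeas : ∀ e, Measurable (edge e)) (n : ℕ) (y : Vtx d) :
    MeasurableSet {ω | y ∈ ball edge ω n} :=
  SimpleGraph.measurableSet_edist_le (measurableSet_percGraph_adj hmeas) 0 n y

lemma measurable_encard_ball (hmeas : ∀ e, Measurable (edge e)) (n : ℕ) :
    Measurable fun ω => ((ball edge ω n).encard : ℝ≥0∞) := by
  simp_rw [encard_ball_eq_tsum]
  exact .tsum fun y => measurable_one.indicator (measurableSet_mem_ball hmeas n y)

lemma lintegral_encard_ball (hmeas : ∀ e, Measurable (edge e)) (ν : Measure Ω) (n : ℕ) :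
    ∫⁻ ω, ((ball edge ω n).encard : ℝ≥0∞) ∂ν = ∑' y, ν {ω | y ∈ ball edge ω n} := by
  simp_rw [encard_ball_eq_tsum]
  rw [lintegral_tsum fun y =>
    (measurable_one.indicator (measurableSet_mem_ball hmeas n y)).aemeasurable]
  congr with y
  exact lintegral_indicator_one (measurableSet_mem_ball hmeas n y)

lemma one_le_EB [IsProbabilityMeasure μ] (n : ℕ) : 1 ≤ EB μ edge n :=
  calc (1 : ℝ≥0∞) = ∫⁻ _, 1 ∂μ := by simp
    _ ≤ EB μ edge n := lintegral_mono fun ω => by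
        have : (0 : Vtx d) ∈ ball edge ω n := by simp [ball]
        simpa using ENat.toENNReal_le.2 (Set.one_le_encard_iff_nonempty.2 ⟨0, this⟩)

lemma measure_setOf_ball_infinite (hmeas : ∀ e, Measurable (edge e)) {j : ℕ}
    (hEB : EB μ edge j ≠ ⊤) : μ {ω | (ball edge ω j).Infinite} = 0 :=
  measure_mono_null (fun ω hω => by simpa using hω)
    (ae_lt_top (measurable_encard_ball hmeas j) hEB)

lemma tsum_measure_ballEvent_le (hmeas : ∀ e, Measurable (edge e)) (j : ℕ) :
    ∑' (S : Finset (Vtx d)) (y : Vtx d), μ (ballEvent edge j S y) ≤ EB μ edge j := by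
  set A := fun S : Finset (Vtx d) => {ω | (percGraph edge ω).ball 0 j = S}
  have hA S : MeasurableSet (A S) :=
    SimpleGraph.measurableSet_ball_eq (measurableSet_percGraph_adj hmeas) 0 j S
  have hdisj : Pairwise (Function.onFun Disjoint A) := fun S S' hne =>
    Set.disjoint_left.2 fun ω h h' => hne (Finset.coe_injective (h.symm.trans h'))
  calc ∑' (S : Finset (Vtx d)) (y : Vtx d), μ (A S ∩ {ω | y ∈ ball edge ω j})
      = ∑' S, ∫⁻ ω in A S, ((ball edge ω j).encard : ℝ≥0∞) ∂μ := by
        congr with S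
        rw [lintegral_encard_ball hmeas]
        congr with y
        rw [Measure.restrict_apply (measurableSet_mem_ball hmeas j y), inter_comm]
    _ = ∫⁻ ω in ⋃ S, A S, ((ball edge ω j).encard : ℝ≥0∞) ∂μ :=
        (lintegral_iUnion hA hdisj _).symm
    _ ≤ EB μ edge j := setLIntegral_le_lintegral _ _

end ExpectedBallSize

section TranslationInvariance

lemma map_edge_translate (hmodel : IsLRPModel d μ edge lam) (w : Vtx d) (e : PotentialEdge d) :
    μ.map (edge (e.translate w).1) = μ.map (edge e.1) := by
  have := hmodel.prob
  refine Measure.map_eq_map_of_measure_eq_true (hmodel.meas _) (hmodel.meas _) ?_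
  obtain ⟨e, he⟩ := e
  induction e using Sym2.ind with
  | _ u v =>
    have huv : u ≠ v := by simpa using he
    have huv' : u + w ≠ v + w := by simpa using huv
    simp only [PotentialEdge.translate, Sym2.map_mk]
    rw [hmodel.edge_prob _ _ huv', hmodel.edge_prob _ _ huv, add_sub_add_right_eq_sub]

lemma map_translate_eq (hmodel : IsLRPModel d μ edge lam) (w : Vtx d) :
    μ.map (fun ω (e : PotentialEdge d) => edge (e.translate w).1 ω) =
      μ.map (fun ω (e : PotentialEdge d) => edge e.1 ω) := by
  rw [(hmodel.indep.precomp (PotentialEdge.translate_injective w)).map_fun_eq_infinitePi_map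
      fun _ => hmodel.meas _,
    (hmodel.indep.precomp Subtype.val_injective).map_fun_eq_infinitePi_map
      fun _ => hmodel.meas _]
  simp_rw [map_edge_translate hmodel w]

lemma measure_edist_le_translate (hmodel : IsLRPModel d μ edge lam) (a b w : Vtx d) (n : ℕ) :
    μ {ω | (percGraph edge ω).edist (a + w) (b + w) ≤ n} =
      μ {ω | (percGraph edge ω).edist a b ≤ n} := by
  have hF := SimpleGraph.measurableSet_edist_le measurableSet_configGraph_adj a n b
  have hmeas (g : PotentialEdge d → Sym2 (Vtx d)) : Measurable fun ω e => edge (g e) ω :=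
    measurable_pi_iff.2 fun _ => hmodel.meas _
  have h₁ : {ω | (percGraph edge ω).edist (a + w) (b + w) ≤ n} =
      (fun ω (e : PotentialEdge d) => edge (e.translate w).1 ω) ⁻¹'
        {f | (configGraph f).edist a b ≤ n} := by
    ext ω
    simp only [percGraph_eq_configGraph, Set.mem_preimage, Set.mem_ofPred_eq]
    rw [← (configGraphTranslateIso (fun e => edge e.1 ω) w).edist_eq]
    rfl
  have h₂ : {ω | (percGraph edge ω).edist a b ≤ n} =
      (fun ω (e : PotentialEdge d) => edge e.1 ω) ⁻¹' {f | (configGraph f).edist a b ≤ n} := by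
    ext ω; simp [percGraph_eq_configGraph]
  rw [h₁, h₂, ← Measure.map_apply (hmeas _) hF, ← Measure.map_apply (hmeas _) hF,
    map_translate_eq hmodel]

lemma tsum_measure_edist_le_eq_EB (hmodel : IsLRPModel d μ edge lam) (x : Vtx d) (n : ℕ) :
    ∑' z, μ {ω | (percGraph edge ω).edist z x ≤ n} = EB μ edge n := by
  rw [EB, lintegral_encard_ball hmodel.meas,
    ← (Equiv.subLeft x).tsum_eq fun y => μ {ω | y ∈ ball edge ω n}]
  congr with z
  simpa [ball] using measure_edist_le_translate hmodel 0 (x - z) z n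

end TranslationInvariance

lemma measure_edge_le (hmodel : IsLRPModel d μ edge lam) {α β r : ℝ} (hα : 0 ≤ α) (hβ : 0 ≤ β)
    (hub : ∀ r : ℝ, 1 ≤ r → lam r < α * r ^ (-β)) (hr : 0 < r) {y z : Vtx d}
    (hyz : r ≤ ‖y - z‖) : μ {ω | edge s(y, z) ω = true} ≤ ENNReal.ofReal (α * r ^ (-β)) := by
  have hne : y ≠ z := by rintro rfl; simp at hyz; linarith
  rw [hmodel.edge_prob y z hne]
  refine ENNReal.ofReal_le_ofReal ?_
  calc 1 - Real.exp (-lam ‖y - z‖) ≤ lam ‖y - z‖ := by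
        linarith [Real.add_one_le_exp (-lam ‖y - z‖)]
    _ ≤ α * ‖y - z‖ ^ (-β) := (hub _ (one_le_norm_of_ne_zero (sub_ne_zero.2 hne))).le
    _ ≤ α * r ^ (-β) :=
        mul_le_mul_of_nonneg_left (Real.rpow_le_rpow_of_nonpos hr hyz (by linarith)) hα

lemma measure_stepEvent_le (hmodel : IsLRPModel d μ edge lam) {α β r : ℝ} (hα : 0 ≤ α)
    (hβ : 0 ≤ β) (hub : ∀ r : ℝ, 1 ≤ r → lam r < α * r ^ (-β)) (hr : 0 < r) (x : Vtx d)
    (j n : ℕ) (S : Finset (Vtx d)) (y z : Vtx d) :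
    μ (stepEvent edge x r j n S y z) ≤ μ (ballEvent edge j S y) *
      (ENNReal.ofReal (α * r ^ (-β)) * μ {ω | (percGraph edge ω).edist z x ≤ n}) := by
  by_cases hguard : y ∉ S ∧ z ∉ S ∧ r ≤ ‖y - z‖
  swap
  · simp [stepEvent, if_neg hguard]
  obtain ⟨hy, hz, hyz⟩ := hguard
  have hB : MeasurableSet[edgeSigma edge {s(y, z)}] {ω | edge s(y, z) ω = true} :=
    measurableSet_edge_edgeSigma rfl
  have hC : MeasurableSet[edgeSigma edge {e | ∀ u ∈ e, u ∈ ((S : Set (Vtx d)) ∪ {y})ᶜ}]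
      {ω | (restGraph edge ω (S ∪ {y})ᶜ).edist z x ≤ n} := by
    refine SimpleGraph.measurableSet_edist_le (measurableSet_adj_edgeSigma fun ω u v => ?_) z n x
    simp only [restGraph]
    grind
  rw [stepEvent, if_pos ⟨hy, hz, hyz⟩, measure_inter_inter_eq_mul hmodel.meas hmodel.indep ?_ ?_ ?_
    (measurableSet_ballEvent S j y) hB hC, mul_assoc]
  · gcongr
    · exact measure_edge_le hmodel hα hβ hub hr hyz
    · exact fun _ _ h => h.2.2
  all_goals simp only [Set.disjoint_left, Set.mem_singleton_iff, Set.mem_ofPred_eq]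
  · rintro e ⟨u, hue, huS⟩ rfl
    rcases Sym2.mem_iff.1 hue with rfl | rfl <;> contradiction
  · rintro e ⟨u, hue, huS⟩ h
    exact h u hue (Or.inl huS)
  · rintro e rfl h
    exact h y (Sym2.mem_mk_left y z) (Or.inr rfl)

lemma measure_longStepEvent_le (hmodel : IsLRPModel d μ edge lam) {α β r : ℝ} (hα : 0 < α)
    (hβ : 0 ≤ β) (hub : ∀ r : ℝ, 1 ≤ r → lam r < α * r ^ (-β)) (hr : 0 < r) (x : Vtx d)
    (j n : ℕ) :
    μ (longStepEvent edge x r j n) ≤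
      EB μ edge j * EB μ edge n * ENNReal.ofReal (α * r ^ (-β)) := by
  have := hmodel.prob
  set c := ENNReal.ofReal (α * r ^ (-β))
  by_cases hEB : EB μ edge j = ⊤
  · have hc : c ≠ 0 := (ENNReal.ofReal_pos.2 (by positivity)).ne'
    rw [hEB, ENNReal.top_mul (zero_lt_one.trans_le (one_le_EB n)).ne', ENNReal.top_mul hc]
    exact le_top
  calc μ (longStepEvent edge x r j n)
      ≤ μ {ω | (ball edge ω j).Infinite} + ∑' p : (Finset (Vtx d) × Vtx d) × Vtx d,
          μ (stepEvent edge x r j n p.1.1 p.1.2 p.2) :=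
        (measure_mono (longStepEvent_subset x r j n)).trans ((measure_union_le _ _).trans
          (add_le_add le_rfl (measure_iUnion_le _)))
    _ ≤ ∑' p : (Finset (Vtx d) × Vtx d) × Vtx d, μ (ballEvent edge j p.1.1 p.1.2) *
          (c * μ {ω | (percGraph edge ω).edist p.2 x ≤ n}) := by
        rw [measure_setOf_ball_infinite hmodel.meas hEB, zero_add]
        exact ENNReal.tsum_le_tsum fun p => measure_stepEvent_le hmodel hα.le hβ hub hr x j n _ _ _
    _ = (∑' (S : Finset (Vtx d)) (y : Vtx d), μ (ballEvent edge j S y)) * (c * EB μ edge n) := by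
        simp_rw [ENNReal.tsum_prod (f := fun (q : Finset (Vtx d) × Vtx d) z =>
            μ (ballEvent edge j q.1 q.2) * (c * μ {ω | (percGraph edge ω).edist z x ≤ n})),
          ENNReal.tsum_mul_left, tsum_measure_edist_le_eq_EB hmodel, ENNReal.tsum_mul_right]
        rw [ENNReal.tsum_prod (f := fun (S : Finset (Vtx d)) y => μ (ballEvent edge j S y))]
    _ ≤ EB μ edge j * (c * EB μ edge n) := by
        gcongr; exact tsum_measure_ballEvent_le hmodel.meas j
    _ = EB μ edge j * EB μ edge n * c := by ring

end LongRangePercolation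

/-- For long-range percolation on `ℤ^d` with `λ(r) < α r^(-β'')` for all
`r ≥ 1`: for every `k ≥ 1` and every `x ≠ 0`,
`P(D(0,x) ≤ k) ≤ Σ_{i=1}^k E|B_{i-1}| E|B_{k-i}| α (‖x‖/k)^{-β''}`. -/
theorem stmt8 {d : ℕ} {Ω : Type*} [MeasurableSpace Ω] (μ : Measure Ω)
    (edge : Sym2 (Vtx d) → Ω → Bool) (lam : ℝ → ℝ) (α β'' : ℝ)
    (hα : 0 < α) (hβ'' : 0 < β'')
    (hmodel : IsLRPModel d μ edge lam)
    (hub : ∀ r : ℝ, 1 ≤ r → lam r < α * r ^ (-β'')) :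
    ∀ k : ℕ, 1 ≤ k → ∀ x : Vtx d, x ≠ 0 →
      μ {ω | (percGraph edge ω).edist 0 x ≤ (k : ℕ∞)} ≤
        ∑ i ∈ Finset.Icc 1 k,
          EB μ edge (i - 1) * EB μ edge (k - i) *
            ENNReal.ofReal (α * (‖x‖ / (k : ℝ)) ^ (-β'')) := by
  intro k hk x hx
  have hr : 0 < ‖x‖ / (k : ℝ) := div_pos (norm_pos_iff.2 hx) (by exact_mod_cast hk)
  calc μ {ω | (percGraph edge ω).edist 0 x ≤ (k : ℕ∞)}
      ≤ μ (⋃ j ∈ Finset.range k, longStepEvent edge x (‖x‖ / k) j (k - 1 - j)) :=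
        measure_mono (setOf_edist_le_subset_iUnion_longStepEvent hx k)
    _ ≤ ∑ j ∈ Finset.range k, μ (longStepEvent edge x (‖x‖ / k) j (k - 1 - j)) :=
        measure_biUnion_finset_le _ _
    _ ≤ ∑ j ∈ Finset.range k, EB μ edge j * EB μ edge (k - 1 - j) *
          ENNReal.ofReal (α * (‖x‖ / (k : ℝ)) ^ (-β'')) :=
        Finset.sum_le_sum fun j _ =>
          measure_longStepEvent_le hmodel hα hβ''.le hub hr x j (k - 1 - j)
    _ = _ := by
        refine Finset.sum_nbij' (· + 1) (· - 1) ?_ ?_ ?_ ?_ ?_ <;> intro j hj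
        all_goals simp only [Finset.mem_range, Finset.mem_Icc] at hj ⊢
        all_goals try omega
        rw [Nat.add_sub_cancel, Nat.sub_sub, add_comm 1 j]
end
end

section
/- Let L : (0,∞) → (0,∞) be slowly varying, non-increasing and strictly less than 1 on [K,∞) for some K > 1. Then the condition −∫_K^∞ log[L(r)] / (r (log r)^2) dr < ∞ is equivalent to the following condition: for every δ > 0 there exists K_1 = K_1(δ) > K such that for all r > K_1, Σ_{k=1}^∞ log[L(r^{2^k})] / (2^k log r) > −δ, i.e. Π_{k=1}^∞ [L(r^{2^k})]^{2^{−k}} > r^{−δ}. -/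
open MeasureTheory ProbabilityTheory Filter Set
open scoped ENNReal NNReal

noncomputable section

open LongRangePercolation

open Real Topology

/-!
Put `f = -log ∘ L`, nonnegative and nondecreasing on `[K, ∞)`. As `-1 / log t` is a primitive of
`1 / (t log² t)`, the block `(r^{2^k}, r^{2^{k+1}}]` has weight `1 / (2^{k+1} log r)`, half the
coefficient of the `k`-th term of the series. Bounding `f` on each block by its values at the
endpoints sandwiches the series between `∫_{r²}^∞ f(t) dt / (t log² t)` and twice that
integral: the series tends to `0` when the integral is finite, and one finite value of it bounds
the integral.
-/

theorem Monotone.iUnion_Ioc_succ_eq_Ioi {α : Type*} [LinearOrder α] {u : ℕ → α}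
    (hu : Monotone u) (hunb : ∀ x, ∃ n, x ≤ u n) :
    ⋃ n, Ioc (u n) (u (n + 1)) = Ioi (u 0) := by
  refine (iUnion_subset fun n x hx => (hu n.zero_le).trans_lt hx.1).antisymm fun x hx => ?_
  obtain ⟨N, hN⟩ := hunb x
  obtain ⟨i, -, hi⟩ := mem_iUnion₂.1 (Ioc_subset_biUnion_Ioc N u ⟨hx, hN⟩)
  exact mem_iUnion.2 ⟨i, hi⟩

theorem tendsto_setLIntegral_Ioi_atTop_zero {μ : Measure ℝ} {g : ℝ → ℝ≥0∞} {a : ℝ}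
    (h : ∫⁻ t in Ioi a, g t ∂μ ≠ ∞) :
    Tendsto (fun s => ∫⁻ t in Ioi s, g t ∂μ) atTop (𝓝 0) := by
  set ν := (μ.restrict (Ioi a)).withDensity g
  have hν : ∀ s, a ≤ s → ν (Ioi s) = ∫⁻ t in Ioi s, g t ∂μ := fun s hs => by
    rw [withDensity_apply _ measurableSet_Ioi, Measure.restrict_restrict measurableSet_Ioi,
      inter_eq_left.2 (Ioi_subset_Ioi hs)]
  have hlim : Tendsto (ν ∘ Ioi) atTop (𝓝 (ν (⋂ s, Ioi s))) :=
    tendsto_measure_iInter_atTop (fun _ => measurableSet_Ioi.nullMeasurableSet)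
      antitone_Ioi ⟨a, by rwa [hν a le_rfl]⟩
  have hempty : ⋂ s : ℝ, Ioi s = ∅ := iInter_eq_empty_iff.2 fun x => ⟨x, lt_irrefl x⟩
  rw [hempty, measure_empty] at hlim
  exact hlim.congr' (eventually_ge_atTop a |>.mono fun s hs => hν s hs)

theorem hasDerivAt_neg_inv_log {t : ℝ} (ht : 1 < t) :
    HasDerivAt (fun u => -(log u)⁻¹) (t * log t ^ 2)⁻¹ t := by
  have h := ((hasDerivAt_log (by positivity)).inv (log_pos ht).ne').neg
  exact h.congr_deriv (by field_simp)

theorem continuousOn_inv_mul_log_sq : ContinuousOn (fun t => (t * log t ^ 2)⁻¹) (Ioi 1) :=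
  fun t (ht : 1 < t) => by
    have ht0 : 0 < t := by linarith
    have hlog : 0 < log t := log_pos ht
    exact ContinuousAt.continuousWithinAt (by fun_prop (disch := positivity))

theorem integral_inv_mul_log_sq {a b : ℝ} (ha : 1 < a) (hab : a ≤ b) :
    ∫ t in a..b, (t * log t ^ 2)⁻¹ = (log a)⁻¹ - (log b)⁻¹ := by
  have hsub : uIcc a b ⊆ Ioi 1 := fun t ht => ha.trans_le (uIcc_of_le hab ▸ ht).1
  rw [intervalIntegral.integral_eq_sub_of_hasDerivAt
    (fun t ht => hasDerivAt_neg_inv_log (hsub ht))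
    (continuousOn_inv_mul_log_sq.mono hsub).intervalIntegrable]
  ring

theorem setLIntegral_Ioc_div_mul_log_sq {a b c : ℝ} (ha : 1 < a) (hab : a ≤ b) (hc : 0 ≤ c) :
    ∫⁻ t in Ioc a b, ENNReal.ofReal (c / (t * log t ^ 2)) =
      ENNReal.ofReal (c * ((log a)⁻¹ - (log b)⁻¹)) := by
  have hnonneg : ∀ t ∈ Ioc a b, 0 ≤ c / (t * log t ^ 2) := fun t ht => by
    have : 0 < t := by linarith [ht.1]
    positivity
  have hint : IntegrableOn (fun t => c / (t * log t ^ 2)) (Ioc a b) := by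
    simp_rw [div_eq_mul_inv]
    refine Integrable.const_mul ?_ c
    exact ((continuousOn_inv_mul_log_sq.mono fun t ht => ha.trans_le ht.1).integrableOn_Icc
      ).mono_set Ioc_subset_Icc_self
  rw [← ofReal_integral_eq_lintegral_ofReal hint
    ((ae_restrict_iff' measurableSet_Ioc).2 (ae_of_all _ hnonneg)),
    ← intervalIntegral.integral_of_le hab]
  simp_rw [div_eq_mul_inv]
  rw [intervalIntegral.integral_const_mul, integral_inv_mul_log_sq ha hab]

section BlockBounds

variable {f : ℝ → ℝ} {a b : ℝ}

theorem ofReal_mul_sub_inv_log_le_setLIntegral (ha : 1 < a) (hab : a ≤ b)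
    (hf : MonotoneOn f (Icc a b)) (hfa : 0 ≤ f a) :
    ENNReal.ofReal (f a * ((log a)⁻¹ - (log b)⁻¹)) ≤
      ∫⁻ t in Ioc a b, ENNReal.ofReal (f t / (t * log t ^ 2)) := by
  rw [← setLIntegral_Ioc_div_mul_log_sq ha hab hfa]
  refine setLIntegral_mono' measurableSet_Ioc fun t ht => ENNReal.ofReal_le_ofReal ?_
  have : 0 < t := by linarith [ht.1]
  exact div_le_div_of_nonneg_right (hf ⟨le_rfl, hab⟩ (Ioc_subset_Icc_self ht) ht.1.le)
    (by positivity)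

theorem setLIntegral_le_ofReal_mul_sub_inv_log (ha : 1 < a) (hab : a ≤ b)
    (hf : MonotoneOn f (Icc a b)) (hfa : 0 ≤ f a) :
    ∫⁻ t in Ioc a b, ENNReal.ofReal (f t / (t * log t ^ 2)) ≤
      ENNReal.ofReal (f b * ((log a)⁻¹ - (log b)⁻¹)) := by
  have hfb : 0 ≤ f b := hfa.trans (hf ⟨le_rfl, hab⟩ ⟨hab, le_rfl⟩ hab)
  rw [← setLIntegral_Ioc_div_mul_log_sq ha hab hfb]
  refine setLIntegral_mono' measurableSet_Ioc fun t ht => ENNReal.ofReal_le_ofReal ?_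
  have : 0 < t := by linarith [ht.1]
  exact div_le_div_of_nonneg_right (hf (Ioc_subset_Icc_self ht) ⟨hab, le_rfl⟩ ht.2)
    (by positivity)

end BlockBounds

theorem inv_log_pow_two_pow_sub (r : ℝ) (n : ℕ) :
    (log (r ^ 2 ^ n))⁻¹ - (log (r ^ 2 ^ (n + 1)))⁻¹ = ((2 : ℝ) ^ (n + 1) * log r)⁻¹ := by
  rcases eq_or_ne (log r) 0 with h | h
  · simp [h]
  · simp only [log_pow, Nat.cast_pow, Nat.cast_ofNat]
    field_simp
    ring

theorem monotone_pow_two_pow {r : ℝ} (hr : 1 ≤ r) : Monotone fun n : ℕ => r ^ 2 ^ n :=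
  fun _ _ hmn => pow_le_pow_right₀ hr (Nat.pow_le_pow_right two_pos hmn)

theorem setLIntegral_Ioi_sq_eq_tsum {r : ℝ} (hr : 1 < r) (g : ℝ → ℝ≥0∞) :
    ∫⁻ t in Ioi (r ^ 2), g t =
      ∑' k : ℕ, ∫⁻ t in Ioc (r ^ 2 ^ (k + 1)) (r ^ 2 ^ (k + 2)), g t := by
  have hu : Monotone fun k : ℕ => r ^ 2 ^ (k + 1) :=
    (monotone_pow_two_pow hr.le).comp fun _ _ h => Nat.succ_le_succ h
  have hunb : ∀ x, ∃ k : ℕ, x ≤ r ^ 2 ^ (k + 1) := fun x => by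
    obtain ⟨n, hn⟩ := pow_unbounded_of_one_lt x hr
    exact ⟨n, hn.le.trans (pow_le_pow_right₀ hr.le
      (Nat.lt_two_pow_self.le.trans (Nat.pow_le_pow_right two_pos n.le_succ)))⟩
  have hunion := hu.iUnion_Ioc_succ_eq_Ioi hunb
  simp only [zero_add, pow_one] at hunion
  rw [← hunion, lintegral_iUnion (fun _ => measurableSet_Ioc)
    (by simpa using hu.pairwise_disjoint_on_Ioc_succ)]

def dyadicLogSum (f : ℝ → ℝ) (r : ℝ) : ℝ≥0∞ :=
  ∑' k : ℕ, ENNReal.ofReal (f (r ^ (2 ^ (k + 1) : ℕ)) / ((2 : ℝ) ^ (k + 1) * log r))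

section Dyadic

variable {f : ℝ → ℝ} {a r : ℝ}

theorem dyadic_block_bounds (hr : 1 < r) (hf : MonotoneOn f (Ici a)) (hfa : 0 ≤ f a)
    (har : a ≤ r ^ 2) (k : ℕ) :
    ENNReal.ofReal (f (r ^ 2 ^ (k + 1)) / (2 ^ (k + 1) * log r)) ≤
        2 * ∫⁻ t in Ioc (r ^ 2 ^ (k + 1)) (r ^ 2 ^ (k + 2)),
          ENNReal.ofReal (f t / (t * log t ^ 2)) ∧
      ∫⁻ t in Ioc (r ^ 2 ^ (k + 1)) (r ^ 2 ^ (k + 2)),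
          ENNReal.ofReal (f t / (t * log t ^ 2)) ≤
        ENNReal.ofReal (f (r ^ 2 ^ (k + 2)) / (2 ^ (k + 2) * log r)) := by
  have hak : a ≤ r ^ 2 ^ (k + 1) :=
    har.trans (by simpa using monotone_pow_two_pow hr.le (Nat.succ_le_succ k.zero_le))
  have hlt : 1 < r ^ 2 ^ (k + 1) := one_lt_pow₀ hr (by positivity)
  have hle : r ^ 2 ^ (k + 1) ≤ r ^ 2 ^ (k + 2) := monotone_pow_two_pow hr.le (by omega)
  have hmono : MonotoneOn f (Icc (r ^ 2 ^ (k + 1)) (r ^ 2 ^ (k + 2))) :=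
    hf.mono fun t ht => hak.trans ht.1
  have hfak : 0 ≤ f (r ^ 2 ^ (k + 1)) := hfa.trans (hf self_mem_Ici hak hak)
  have hdiff := inv_log_pow_two_pow_sub r (k + 1)
  constructor
  · have hlower := ofReal_mul_sub_inv_log_le_setLIntegral hlt hle hmono hfak
    rw [hdiff] at hlower
    calc ENNReal.ofReal (f (r ^ 2 ^ (k + 1)) / (2 ^ (k + 1) * log r))
        = 2 * ENNReal.ofReal (f (r ^ 2 ^ (k + 1)) * (2 ^ (k + 2) * log r)⁻¹) := by
          rw [← ENNReal.ofReal_ofNat 2, ← ENNReal.ofReal_mul zero_le_two]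
          congr 1
          ring
      _ ≤ _ := by gcongr
  · have hupper := setLIntegral_le_ofReal_mul_sub_inv_log hlt hle hmono hfak
    rwa [hdiff, ← div_eq_mul_inv] at hupper

theorem setLIntegral_Ioi_le_dyadicLogSum (hr : 1 < r) (hf : MonotoneOn f (Ici a))
    (hfa : 0 ≤ f a) (har : a ≤ r ^ 2) :
    ∫⁻ t in Ioi (r ^ 2), ENNReal.ofReal (f t / (t * log t ^ 2)) ≤ dyadicLogSum f r :=
  calc ∫⁻ t in Ioi (r ^ 2), ENNReal.ofReal (f t / (t * log t ^ 2))
      ≤ ∑' k : ℕ, ENNReal.ofReal (f (r ^ 2 ^ (k + 2)) / (2 ^ (k + 2) * log r)) := by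
        rw [setLIntegral_Ioi_sq_eq_tsum hr]
        exact ENNReal.tsum_le_tsum fun k => (dyadic_block_bounds hr hf hfa har k).2
    _ ≤ dyadicLogSum f r :=
        ENNReal.tsum_comp_le_tsum_of_injective (add_left_injective 1) _

theorem dyadicLogSum_le_two_mul_setLIntegral_Ioi (hr : 1 < r) (hf : MonotoneOn f (Ici a))
    (hfa : 0 ≤ f a) (har : a ≤ r ^ 2) :
    dyadicLogSum f r ≤ 2 * ∫⁻ t in Ioi (r ^ 2), ENNReal.ofReal (f t / (t * log t ^ 2)) := by
  rw [setLIntegral_Ioi_sq_eq_tsum hr, ← ENNReal.tsum_mul_left]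
  exact ENNReal.tsum_le_tsum fun k => (dyadic_block_bounds hr hf hfa har k).1

end Dyadic

section Comparison

variable {f : ℝ → ℝ} {a : ℝ}

theorem tendsto_dyadicLogSum_atTop_zero (ha : 1 < a) (hf : MonotoneOn f (Ici a)) (hfa : 0 ≤ f a)
    (hI : ∫⁻ t in Ioi a, ENNReal.ofReal (f t / (t * log t ^ 2)) ≠ ∞) :
    Tendsto (dyadicLogSum f) atTop (𝓝 0) := by
  have htail := (ENNReal.Tendsto.const_mul (tendsto_setLIntegral_Ioi_atTop_zero hI)
    (a := 2) (Or.inr ENNReal.ofNat_ne_top)).comp (tendsto_pow_atTop two_ne_zero)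
  rw [mul_zero] at htail
  refine tendsto_of_tendsto_of_tendsto_of_le_of_le' tendsto_const_nhds htail
    (Eventually.of_forall fun _ => zero_le) ?_
  filter_upwards [eventually_ge_atTop a] with r har
  exact dyadicLogSum_le_two_mul_setLIntegral_Ioi (ha.trans_le har) hf hfa
    (by nlinarith)

theorem setLIntegral_Ioi_lt_top_of_dyadicLogSum_lt_top (ha : 1 < a) (hf : MonotoneOn f (Ici a))
    (hfa : 0 ≤ f a) {r : ℝ} (har : a < r) (hr : dyadicLogSum f r < ∞) :
    ∫⁻ t in Ioi a, ENNReal.ofReal (f t / (t * log t ^ 2)) < ∞ := by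
  have har2 : a ≤ r ^ 2 := by nlinarith
  calc ∫⁻ t in Ioi a, ENNReal.ofReal (f t / (t * log t ^ 2))
      ≤ (∫⁻ t in Ioc a (r ^ 2), ENNReal.ofReal (f t / (t * log t ^ 2))) +
          ∫⁻ t in Ioi (r ^ 2), ENNReal.ofReal (f t / (t * log t ^ 2)) := by
        rw [← Ioc_union_Ioi_eq_Ioi har2]
        exact lintegral_union_le _ _ _
    _ < ∞ := ENNReal.add_lt_top.2
        ⟨(setLIntegral_le_ofReal_mul_sub_inv_log ha har2 (hf.mono Icc_subset_Ici_self)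
            hfa).trans_lt ENNReal.ofReal_lt_top,
          (setLIntegral_Ioi_le_dyadicLogSum (ha.trans har) hf hfa har2).trans_lt hr⟩

end Comparison

theorem stmt10_general (L : ℝ → ℝ) (K : ℝ) (hK : 1 < K)
    (hLpos : ∀ r : ℝ, 0 < r → 0 < L r)
    (hanti : AntitoneOn L (Set.Ici K)) (hlt1 : ∀ r : ℝ, K ≤ r → L r < 1) :
    (∫⁻ r in Set.Ioi K,
        ENNReal.ofReal (-Real.log (L r) / (r * Real.log r ^ 2)) < ⊤) ↔
    (∀ δ : ℝ, 0 < δ → ∃ K1 : ℝ, K < K1 ∧ ∀ r : ℝ, K1 < r →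
        ∑' k : ℕ, ENNReal.ofReal
            (-Real.log (L (r ^ (2 ^ (k + 1) : ℕ))) / ((2 : ℝ) ^ (k + 1) * Real.log r))
          < ENNReal.ofReal δ) := by
  have hf : MonotoneOn (fun t => -log (L t)) (Ici K) := fun s hs t ht hst =>
    neg_le_neg (log_le_log (hLpos t (by linarith [mem_Ici.1 ht])) (hanti hs ht hst))
  have hfK : 0 ≤ -log (L K) :=
    neg_nonneg.2 (log_nonpos (hLpos K (by linarith)).le (hlt1 K le_rfl).le)
  constructor
  · intro hI δ hδ
    obtain ⟨K1, hK1⟩ := eventually_atTop.1 ((tendsto_dyadicLogSum_atTop_zero hK hf hfK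
      hI.ne).eventually_lt_const (ENNReal.ofReal_pos.2 hδ))
    exact ⟨max K1 K + 1, by linarith [le_max_right K1 K],
      fun r hr => hK1 r (by linarith [le_max_left K1 K])⟩
  · intro h
    obtain ⟨K1, hKK1, hsum⟩ := h 1 one_pos
    exact setLIntegral_Ioi_lt_top_of_dyadicLogSum_lt_top hK hf hfK (hKK1.trans (lt_add_one K1))
      ((hsum _ (lt_add_one K1)).trans ENNReal.ofReal_lt_top)

/-- For `L` positive slowly varying, non-increasing and `< 1` on `[K, ∞)`
with `K > 1`: `-∫_K^∞ log L(r)/(r (log r)^2) dr < ∞` iff for every `δ > 0` there is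
`K₁ > K` such that for all `r > K₁`,
`Σ_{k=1}^∞ log L(r^{2^k})/(2^k log r) > -δ`
(stated equivalently as `Σ_{k=1}^∞ (-log L(r^{2^k}))/(2^k log r) < δ`). -/
theorem stmt10 (L : ℝ → ℝ) (K : ℝ) (hK : 1 < K)
    (hL : SlowlyVarying L) (hLpos : ∀ r : ℝ, 0 < r → 0 < L r) (hLmeas : Measurable L)
    (hanti : AntitoneOn L (Set.Ici K)) (hlt1 : ∀ r : ℝ, K ≤ r → L r < 1) :
    (∫⁻ r in Set.Ioi K,
        ENNReal.ofReal (-Real.log (L r) / (r * Real.log r ^ 2)) < ⊤) ↔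
    (∀ δ : ℝ, 0 < δ → ∃ K1 : ℝ, K < K1 ∧ ∀ r : ℝ, K1 < r →
        ∑' k : ℕ, ENNReal.ofReal
            (-Real.log (L (r ^ (2 ^ (k + 1) : ℕ))) / ((2 : ℝ) ^ (k + 1) * Real.log r))
          < ENNReal.ofReal δ) :=
  stmt10_general L K hK hLpos hanti hlt1
end
end
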